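/- Let y_1, …, y_n ∈ ℝᵖ and for i = 1,…,n, k = 1,…,K let t_ik ≥ 0. For each k, suppose: U is a p×d matrix and V a p×(p−d) matrix such that W = [U,V] satisfies WᵗW = WWᵗ = I_p; Σ_k is a symmetric positive definite d×d matrix and β_k > 0; Δ_k is the block-diagonal matrix with blocks Σ_k and β_k I_{p−d}; S_k = W Δ_k Wᵗ; π_k > 0; m_k = (1/n_k) ∑_i t_ik y_i where n_k = ∑_i t_ik > 0; and C_k = (1/n_k) ∑_i t_ik (y_i − m_k)(y_i − m_k)ᵗ. Define φ(y; m, S) = (2π_c)^{−p/2} det(S)^{−1/2} exp(−½(y−m)ᵗS⁻¹(y−m)). Then ∑_{i=1}^n ∑_{k=1}^K t_ik · log(π_k φ(y_i; m_k, S_k)) = −½ ∑_{k=1}^K n_k [ −2 log(π_k) + trace(Σ_k⁻¹ Uᵗ C_k U) + log(det Σ_k) + (p−d) log(β_k) + (1/β_k)(trace(C_k) − ∑_{j=1}^d u_jᵗ C_k u_j) + p·log(2π_c) ], where u_j is the j-th column of U and π_c the circle constant. -/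

import Mathlib

open Matrix

/-- The multivariate Gaussian density
`φ(y; m, S) = (2π)^(-p/2) det(S)^(-1/2) exp(-½ (y-m)ᵗ S⁻¹ (y-m))`. -/
noncomputable def gaussianDensity {p : ℕ} (S : Matrix (Fin p) (Fin p) ℝ)
    (m y : Fin p → ℝ) : ℝ :=
  (2 * Real.pi) ^ (-(p : ℝ) / 2) * S.det ^ (-(1 : ℝ) / 2) *
    Real.exp (-(1 / 2) * ((y - m) ⬝ᵥ S⁻¹.mulVec (y - m)))

/-!
Each summand splits as `log π_k - (p/2) log 2π - ½ log det S_k - ½ (y_i - m_k)ᵗ S_k⁻¹ (y_i - m_k)`,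
and weighted by `t_ik` the quadratic forms add up to `n_k tr(S_k⁻¹ C_k)`. Because `W = [U, V]` is
orthogonal, `det S_k = det Σ_k · β_k^(p-d)` and `S_k⁻¹ = U Σ_k⁻¹ Uᵗ + β_k⁻¹ V Vᵗ` with
`V Vᵗ = I - U Uᵗ`, so `tr(S_k⁻¹ C_k) = tr(Σ_k⁻¹ Uᵗ C_k U) + β_k⁻¹ (tr C_k - tr(Uᵗ C_k U))`.
-/

section GaussianLogLikelihood

variable {ι n R : Type*} [Fintype ι] [Fintype n]

lemma dotProduct_mulVec_self_eq_trace [CommSemiring R] (A : Matrix n n R) (x : n → R) :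
    x ⬝ᵥ A *ᵥ x = (A * vecMulVec x x).trace := by
  rw [mul_vecMulVec, trace_vecMulVec, dotProduct_comm]

lemma sum_mul_dotProduct_mulVec_eq_trace [CommSemiring R] (A : Matrix n n R) (t : ι → R)
    (x : ι → n → R) :
    ∑ i, t i * (x i ⬝ᵥ A *ᵥ x i) = (A * ∑ i, t i • vecMulVec (x i) (x i)).trace := by
  simp only [Matrix.mul_sum, trace_sum, Matrix.mul_smul, trace_smul, smul_eq_mul,
    dotProduct_mulVec_self_eq_trace]

variable {p : ℕ} {S : Matrix (Fin p) (Fin p) ℝ}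

lemma gaussianDensity_pos (hS : 0 < S.det) (μ y : Fin p → ℝ) : 0 < gaussianDensity S μ y := by
  unfold gaussianDensity
  have hdet := Real.rpow_pos_of_pos hS (-(1 : ℝ) / 2)
  positivity

lemma log_gaussianDensity (hS : 0 < S.det) (μ y : Fin p → ℝ) :
    Real.log (gaussianDensity S μ y) = -(p / 2) * Real.log (2 * Real.pi) - Real.log S.det / 2
      - (y - μ) ⬝ᵥ S⁻¹ *ᵥ (y - μ) / 2 := by
  have h2π : 0 < 2 * Real.pi := by positivity
  have hdet := Real.rpow_pos_of_pos hS (-(1 : ℝ) / 2)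
  unfold gaussianDensity
  rw [Real.log_mul (by positivity) (Real.exp_ne_zero _), Real.log_mul (by positivity) hdet.ne',
    Real.log_rpow h2π, Real.log_rpow hS, Real.log_exp]
  ring

lemma sum_mul_log_mul_gaussianDensity {w : ℝ} (hw : 0 < w) (hS : 0 < S.det) (t : ι → ℝ)
    (ht : ∑ i, t i ≠ 0) (y : ι → Fin p → ℝ) (μ : Fin p → ℝ) :
    ∑ i, t i * Real.log (w * gaussianDensity S μ (y i))
      = (∑ i, t i) * (Real.log w - (p / 2) * Real.log (2 * Real.pi) - Real.log S.det / 2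
          - (S⁻¹ * ((∑ i, t i)⁻¹ • ∑ i, t i • vecMulVec (y i - μ) (y i - μ))).trace / 2) := by
  set c := Real.log w - (p / 2) * Real.log (2 * Real.pi) - Real.log S.det / 2
  calc ∑ i, t i * Real.log (w * gaussianDensity S μ (y i))
      = ∑ i, (t i * c - t i * ((y i - μ) ⬝ᵥ S⁻¹ *ᵥ (y i - μ)) / 2) := by
        refine Finset.sum_congr rfl fun i _ => ?_
        rw [Real.log_mul hw.ne' (gaussianDensity_pos hS μ (y i)).ne', log_gaussianDensity hS]
        ring
    _ = (∑ i, t i) * c - (S⁻¹ * ∑ i, t i • vecMulVec (y i - μ) (y i - μ)).trace / 2 := by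
        rw [Finset.sum_sub_distrib, ← Finset.sum_mul, ← Finset.sum_div,
          sum_mul_dotProduct_mulVec_eq_trace]
    _ = _ := by
        rw [Matrix.mul_smul, trace_smul, smul_eq_mul]
        field_simp

end GaussianLogLikelihood

section OrthogonalConjugation

variable {m n R : Type*} [Fintype m] [Fintype n] [DecidableEq m] [DecidableEq n]
  [CommRing R]

theorem det_mul_mul_transpose_of_transpose_mul_self_eq_one (e : n ≃ m) {W : Matrix m n R}
    (hW : Wᵀ * W = 1) (D : Matrix n n R) : (W * D * Wᵀ).det = D.det := by
  let W' := W.submatrix id e.symm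
  have hW' : W'ᵀ * W' = 1 := by
    have h := submatrix_mul_equiv Wᵀ W e.symm (Equiv.refl m) e.symm
    rw [Equiv.coe_refl] at h
    rw [transpose_submatrix, h, hW, submatrix_one_equiv]
  have hconj : W * D * Wᵀ = W' * D.submatrix e.symm e.symm * W'ᵀ := by
    rw [transpose_submatrix, submatrix_mul_equiv, submatrix_mul_equiv, submatrix_id_id]
  have hdetW' : W'ᵀ.det * W'.det = 1 := by rw [← det_mul, hW', det_one]
  rw [hconj, det_mul, det_mul, det_submatrix_equiv_self]
  linear_combination D.det * hdetW'

theorem inv_mul_mul_transpose_of_orthogonal {W : Matrix m n R} (h₁ : Wᵀ * W = 1)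
    (h₂ : W * Wᵀ = 1) {D : Matrix n n R} (hD : IsUnit D.det) :
    (W * D * Wᵀ)⁻¹ = W * D⁻¹ * Wᵀ := by
  refine inv_eq_right_inv ?_
  calc W * D * Wᵀ * (W * D⁻¹ * Wᵀ) = W * (D * (Wᵀ * W) * D⁻¹) * Wᵀ := by
        simp only [Matrix.mul_assoc]
    _ = 1 := by rw [h₁, Matrix.mul_one, mul_nonsing_inv _ hD, Matrix.mul_one, h₂]

end OrthogonalConjugation

section BlockDiagonal

variable {m n₁ n₂ R : Type*} [Fintype n₁] [Fintype n₂]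

theorem fromCols_mul_fromBlocks_diag_mul_transpose [CommSemiring R] (U : Matrix m n₁ R)
    (V : Matrix m n₂ R) (A : Matrix n₁ n₁ R) (B : Matrix n₂ n₂ R) :
    fromCols U V * fromBlocks A 0 0 B * (fromCols U V)ᵀ = U * A * Uᵀ + V * B * Vᵀ := by
  rw [fromCols_mul_fromBlocks, transpose_fromCols, fromCols_mul_fromRows]
  simp

theorem inv_fromBlocks_smul_one [DecidableEq n₁] [DecidableEq n₂] [Field R]
    {A : Matrix n₁ n₁ R} (hA : IsUnit A.det) {β : R} (hβ : β ≠ 0) :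
    (fromBlocks A 0 0 (β • 1 : Matrix n₂ n₂ R))⁻¹ = fromBlocks A⁻¹ 0 0 (β⁻¹ • 1) := by
  refine inv_eq_right_inv ?_
  rw [fromBlocks_multiply]
  simp [mul_nonsing_inv _ hA, smul_smul, hβ, fromBlocks_one]

theorem trace_transpose_mul_mul_eq_sum_dotProduct [Fintype m] [CommSemiring R]
    (U : Matrix m n₁ R) (C : Matrix m m R) :
    (Uᵀ * C * U).trace = ∑ j, (fun i => U i j) ⬝ᵥ C *ᵥ (fun i => U i j) := by
  rw [Matrix.mul_assoc]
  simp only [trace, diag, mul_apply, transpose_apply, dotProduct, mulVec]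

end BlockDiagonal

section DiscriminativeLatentCovariance

variable {m n₁ n₂ R : Type*} [Fintype m] [Fintype n₁] [Fintype n₂] [DecidableEq m]
  [DecidableEq n₁] [DecidableEq n₂] [Field R]

theorem det_fromBlocks_smul_one (A : Matrix n₁ n₁ R) (β : R) :
    (fromBlocks A 0 0 (β • 1 : Matrix n₂ n₂ R)).det = A.det * β ^ Fintype.card n₂ := by
  rw [det_fromBlocks_zero₂₁, det_smul, det_one, mul_one]

variable {U : Matrix m n₁ R} {V : Matrix m n₂ R}

theorem det_fromCols_mul_fromBlocks_smul_one_mul_transpose (e : n₁ ⊕ n₂ ≃ m)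
    (hW₁ : (fromCols U V)ᵀ * fromCols U V = 1) (A : Matrix n₁ n₁ R) (β : R) :
    (fromCols U V * fromBlocks A 0 0 (β • 1 : Matrix n₂ n₂ R) * (fromCols U V)ᵀ).det
      = A.det * β ^ Fintype.card n₂ := by
  rw [det_mul_mul_transpose_of_transpose_mul_self_eq_one e hW₁, det_fromBlocks_smul_one]

theorem trace_inv_fromCols_mul_fromBlocks_smul_one_mul_transpose_mul
    (hW₁ : (fromCols U V)ᵀ * fromCols U V = 1) (hW₂ : fromCols U V * (fromCols U V)ᵀ = 1)
    {A : Matrix n₁ n₁ R} (hA : IsUnit A.det) {β : R} (hβ : β ≠ 0) (C : Matrix m m R) :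
    ((fromCols U V * fromBlocks A 0 0 (β • 1 : Matrix n₂ n₂ R) * (fromCols U V)ᵀ)⁻¹ * C).trace
      = (A⁻¹ * Uᵀ * C * U).trace + β⁻¹ * (C.trace - (Uᵀ * C * U).trace) := by
  have hΔ : IsUnit (fromBlocks A 0 0 (β • 1 : Matrix n₂ n₂ R)).det := by
    rw [det_fromBlocks_smul_one]
    exact hA.mul (isUnit_iff_ne_zero.mpr (pow_ne_zero _ hβ))
  have hVV : V * Vᵀ = 1 - U * Uᵀ := by
    rw [transpose_fromCols, fromCols_mul_fromRows] at hW₂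
    exact eq_sub_of_add_eq' hW₂
  rw [inv_mul_mul_transpose_of_orthogonal hW₁ hW₂ hΔ, inv_fromBlocks_smul_one hA hβ,
    fromCols_mul_fromBlocks_diag_mul_transpose, Matrix.mul_smul, Matrix.mul_one,
    Matrix.smul_mul, hVV, Matrix.add_mul, trace_add, Matrix.smul_mul, trace_smul, Matrix.sub_mul,
    trace_sub, Matrix.one_mul, smul_eq_mul]
  simp only [Matrix.mul_assoc]
  rw [trace_mul_comm U, trace_mul_comm U]
  simp only [Matrix.mul_assoc]

end DiscriminativeLatentCovariance

theorem stmt_8_general (p d n K : ℕ) (hd : d ≤ p)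
    (y : Fin n → Fin p → ℝ) (t : Fin n → Fin K → ℝ)
    (U : Matrix (Fin p) (Fin d) ℝ) (V : Matrix (Fin p) (Fin (p - d)) ℝ)
    (hW1 : (Matrix.fromCols U V)ᵀ * Matrix.fromCols U V = 1)
    (hW2 : Matrix.fromCols U V * (Matrix.fromCols U V)ᵀ = 1)
    (Sig : Fin K → Matrix (Fin d) (Fin d) ℝ) (hSig : ∀ k, (Sig k).PosDef)
    (β : Fin K → ℝ) (hβ : ∀ k, 0 < β k)
    (S : Fin K → Matrix (Fin p) (Fin p) ℝ)
    (hS : ∀ k, S k = Matrix.fromCols U V *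
        Matrix.fromBlocks (Sig k) 0 0 (β k • (1 : Matrix (Fin (p - d)) (Fin (p - d)) ℝ)) *
        (Matrix.fromCols U V)ᵀ)
    (πk : Fin K → ℝ) (hπ : ∀ k, 0 < πk k)
    (nk : Fin K → ℝ) (hnk : ∀ k, nk k = ∑ i, t i k) (hnkpos : ∀ k, 0 < nk k)
    (m : Fin K → Fin p → ℝ)
    (C : Fin K → Matrix (Fin p) (Fin p) ℝ)
    (hC : ∀ k, C k = (nk k)⁻¹ • ∑ i, t i k • Matrix.vecMulVec (y i - m k) (y i - m k)) :
    ∑ i, ∑ k, t i k * Real.log (πk k * gaussianDensity (S k) (m k) (y i))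
      = -(1 / 2) * ∑ k, nk k *
          (-2 * Real.log (πk k)
            + ((Sig k)⁻¹ * Uᵀ * C k * U).trace
            + Real.log (Sig k).det
            + ((p : ℝ) - (d : ℝ)) * Real.log (β k)
            + (1 / β k) * ((C k).trace
                - ∑ j : Fin d, (fun i => U i j) ⬝ᵥ (C k).mulVec (fun i => U i j))
            + (p : ℝ) * Real.log (2 * Real.pi)) := by
  have e : Fin d ⊕ Fin (p - d) ≃ Fin p :=
    finSumFinEquiv.trans (finCongr (Nat.add_sub_cancel' hd))
  rw [Finset.sum_comm, Finset.mul_sum]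
  refine Finset.sum_congr rfl fun k _ => ?_
  have hdetSig := (hSig k).det_pos
  have hdetS : (S k).det = (Sig k).det * β k ^ (p - d) := by
    rw [hS k, det_fromCols_mul_fromBlocks_smul_one_mul_transpose e hW1, Fintype.card_fin]
  have htrace := trace_inv_fromCols_mul_fromBlocks_smul_one_mul_transpose_mul hW1 hW2
    hdetSig.ne'.isUnit (hβ k).ne' (C k)
  rw [← hS k, trace_transpose_mul_mul_eq_sum_dotProduct] at htrace
  rw [sum_mul_log_mul_gaussianDensity (hπ k) (hdetS ▸ mul_pos hdetSig (pow_pos (hβ k) _)) _ (hnk k ▸ (hnkpos k).ne'),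
    ← hnk k, ← hC k, htrace, hdetS, Real.log_mul hdetSig.ne' (pow_pos (hβ k) _).ne',
    Real.log_pow, Nat.cast_sub hd]
  ring

/-- Proposition 2 of the paper: closed form of the conditional expectation of the
complete log-likelihood for the model DLM_[Σ_kβ_k]. -/
theorem stmt_8 (p d n K : ℕ) (hd : d ≤ p)
    (y : Fin n → Fin p → ℝ) (t : Fin n → Fin K → ℝ) (ht : ∀ i k, 0 ≤ t i k)
    (U : Matrix (Fin p) (Fin d) ℝ) (V : Matrix (Fin p) (Fin (p - d)) ℝ)
    (hW1 : (Matrix.fromCols U V)ᵀ * Matrix.fromCols U V = 1)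
    (hW2 : Matrix.fromCols U V * (Matrix.fromCols U V)ᵀ = 1)
    (Sig : Fin K → Matrix (Fin d) (Fin d) ℝ) (hSig : ∀ k, (Sig k).PosDef)
    (β : Fin K → ℝ) (hβ : ∀ k, 0 < β k)
    (S : Fin K → Matrix (Fin p) (Fin p) ℝ)
    (hS : ∀ k, S k = Matrix.fromCols U V *
        Matrix.fromBlocks (Sig k) 0 0 (β k • (1 : Matrix (Fin (p - d)) (Fin (p - d)) ℝ)) *
        (Matrix.fromCols U V)ᵀ)
    (πk : Fin K → ℝ) (hπ : ∀ k, 0 < πk k)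
    (nk : Fin K → ℝ) (hnk : ∀ k, nk k = ∑ i, t i k) (hnkpos : ∀ k, 0 < nk k)
    (m : Fin K → Fin p → ℝ) (hm : ∀ k, m k = (nk k)⁻¹ • ∑ i, t i k • y i)
    (C : Fin K → Matrix (Fin p) (Fin p) ℝ)
    (hC : ∀ k, C k = (nk k)⁻¹ • ∑ i, t i k • Matrix.vecMulVec (y i - m k) (y i - m k)) :
    ∑ i, ∑ k, t i k * Real.log (πk k * gaussianDensity (S k) (m k) (y i))
      = -(1 / 2) * ∑ k, nk k *
          (-2 * Real.log (πk k)
            + ((Sig k)⁻¹ * Uᵀ * C k * U).trace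
            + Real.log (Sig k).det
            + ((p : ℝ) - (d : ℝ)) * Real.log (β k)
            + (1 / β k) * ((C k).trace
                - ∑ j : Fin d, (fun i => U i j) ⬝ᵥ (C k).mulVec (fun i => U i j))
            + (p : ℝ) * Real.log (2 * Real.pi)) :=
  stmt_8_general p d n K hd y t U V hW1 hW2 Sig hSig β hβ S hS πk hπ nk hnk hnkpos m C hC
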